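/- Let (χ, η) ∈ ℝ² and let w ∈ ℍ satisfy f′_{(χ,η)}(w) = 0. Then e^{C(w)} ≠ e^{C(w̄)} (so χ_L(w) and η_L(w) are well defined), and χ = χ_L(w) and η = η_L(w). -/

import Mathlib

open MeasureTheory Complex Filter Set

noncomputable section

/-- The support of a measure on `ℝ`. -/
def msupport (μ : Measure ℝ) : Set ℝ := {x | ∀ U ∈ nhds x, μ U ≠ 0}

/-- The Cauchy transform `C(w) = ∫ (w - x)⁻¹ dμ(x)`. -/
def cauchy (μ : Measure ℝ) (w : ℂ) : ℂ := ∫ x, (w - (x : ℂ))⁻¹ ∂μ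

/-- `f′_{(χ,η)}(w) = C(w) + Log (w - χ) - Log (w - χ - η + 1)`. -/
def fprime (μ : Measure ℝ) (χ η : ℝ) (w : ℂ) : ℂ :=
  cauchy μ w + Complex.log (w - (χ : ℂ)) - Complex.log (w - (χ : ℂ) - (η : ℂ) + 1)

/-- `χ_L(w) = w + (w - w̄)(e^{C(w̄)} - 1)/(e^{C(w)} - e^{C(w̄)})`. -/
def chiL (μ : Measure ℝ) (w : ℂ) : ℂ :=
  w + (w - (starRingEnd ℂ) w) * (Complex.exp (cauchy μ ((starRingEnd ℂ) w)) - 1) /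
    (Complex.exp (cauchy μ w) - Complex.exp (cauchy μ ((starRingEnd ℂ) w)))

/-- `η_L(w) = 1 + (w - w̄)(e^{C(w)} - 1)(e^{C(w̄)} - 1)/(e^{C(w)} - e^{C(w̄)})`. -/
def etaL (μ : Measure ℝ) (w : ℂ) : ℂ :=
  1 + (w - (starRingEnd ℂ) w) * (Complex.exp (cauchy μ w) - 1) *
      (Complex.exp (cauchy μ ((starRingEnd ℂ) w)) - 1) /
    (Complex.exp (cauchy μ w) - Complex.exp (cauchy μ ((starRingEnd ℂ) w)))

/-!
Exponentiating `f′_{(χ,η)}(w) = 0` gives `e^{C(w)} = 1 + (1 - η)/(w - χ)`, and since `C` commutes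
with conjugation also `e^{C(w̄)} = 1 + (1 - η)/(w̄ - χ)`. Two values of the Möbius map
`z ↦ 1 + (1 - e)/(z - c)` at distinct points determine `c` and `e`, which is what `χ_L`, `η_L`
compute. The two values differ because `η ≠ 1`: for `η = 1` the root equation reads `C(w) = 0`, whereas
`Im C(w) < 0` on `ℍ` for a nonzero finite measure.
-/

open ComplexConjugate

section MoebiusRecovery

variable {K : Type*} [Field K] {c e z z' u v : K}

theorem sub_eq_of_eq_one_add_div (hz : z - c ≠ 0) (hz' : z' - c ≠ 0)
    (hu : u = 1 + (1 - e) / (z - c)) (hv : v = 1 + (1 - e) / (z' - c)) :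
    u - v = (1 - e) * (z' - z) / ((z - c) * (z' - c)) := by
  subst hu hv
  field_simp
  ring

theorem ne_of_eq_one_add_div (he : e ≠ 1) (hzz' : z ≠ z') (hz : z - c ≠ 0) (hz' : z' - c ≠ 0)
    (hu : u = 1 + (1 - e) / (z - c)) (hv : v = 1 + (1 - e) / (z' - c)) : u ≠ v := by
  rw [← sub_ne_zero, sub_eq_of_eq_one_add_div hz hz' hu hv]
  exact div_ne_zero (mul_ne_zero (sub_ne_zero.2 he.symm) (sub_ne_zero.2 hzz'.symm))
    (mul_ne_zero hz hz')

theorem center_eq_of_eq_one_add_div (he : e ≠ 1) (hzz' : z ≠ z') (hz : z - c ≠ 0)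
    (hz' : z' - c ≠ 0) (hu : u = 1 + (1 - e) / (z - c)) (hv : v = 1 + (1 - e) / (z' - c)) :
    c = z + (z - z') * (v - 1) / (u - v) := by
  have hs : 1 - e ≠ 0 := sub_ne_zero.2 he.symm
  have hzz'' : z' - z ≠ 0 := sub_ne_zero.2 hzz'.symm
  rw [sub_eq_of_eq_one_add_div hz hz' hu hv, hv]
  field_simp
  ring

theorem param_eq_of_eq_one_add_div (he : e ≠ 1) (hzz' : z ≠ z') (hz : z - c ≠ 0)
    (hz' : z' - c ≠ 0) (hu : u = 1 + (1 - e) / (z - c)) (hv : v = 1 + (1 - e) / (z' - c)) :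
    e = 1 + (z - z') * (u - 1) * (v - 1) / (u - v) := by
  have hs : 1 - e ≠ 0 := sub_ne_zero.2 he.symm
  have hzz'' : z' - z ≠ 0 := sub_ne_zero.2 hzz'.symm
  rw [sub_eq_of_eq_one_add_div hz hz' hu hv, hu, hv]
  field_simp
  ring

end MoebiusRecovery

theorem sub_ofReal_ne_zero {w : ℂ} (hw : w.im ≠ 0) (x : ℝ) : w - x ≠ 0 :=
  fun h => hw (by simpa using congrArg im h)

section CauchyTransform

variable (μ : Measure ℝ)

theorem cauchy_conj (w : ℂ) : cauchy μ (conj w) = conj (cauchy μ w) := by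
  simp only [cauchy, ← integral_conj, map_inv₀, map_sub, conj_ofReal]

theorem integrable_inv_sub_ofReal [IsFiniteMeasure μ] {w : ℂ} (hw : w.im ≠ 0) :
    Integrable (fun x : ℝ => (w - x)⁻¹) μ := by
  refine Integrable.mono' (integrable_const |w.im|⁻¹)
    ((continuous_const.sub continuous_ofReal).inv₀ (sub_ofReal_ne_zero hw)).aestronglyMeasurable
    (Eventually.of_forall fun x => ?_)
  rw [norm_inv]
  refine inv_anti₀ (abs_pos.2 hw) ?_
  simpa using abs_im_le_norm (w - x)

theorem cauchy_im_neg [IsFiniteMeasure μ] [NeZero μ] {w : ℂ} (hw : 0 < w.im) :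
    (cauchy μ w).im < 0 := by
  have hint := integrable_inv_sub_ofReal μ hw.ne'
  have hpos (x : ℝ) : 0 < -((w - x)⁻¹).im := by
    rw [inv_im, neg_div, neg_neg, sub_im, ofReal_im, sub_zero]
    exact div_pos hw (normSq_pos.2 (sub_ofReal_ne_zero hw.ne' x))
  have hsupp : Function.support (fun x : ℝ => -((w - x)⁻¹).im) = univ :=
    eq_univ_of_forall fun x => (hpos x).ne'
  have hint_pos : 0 < ∫ x, -((w - x)⁻¹).im ∂μ := by
    rw [integral_pos_iff_support_of_nonneg (fun x => (hpos x).le) hint.im.neg, hsupp,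
      Measure.measure_univ_pos]
    exact NeZero.ne μ
  have him : ∫ x, ((w - x)⁻¹).im ∂μ = (cauchy μ w).im := integral_im hint
  rw [integral_neg, him] at hint_pos
  linarith

theorem fprime_one (χ : ℝ) (w : ℂ) : fprime μ χ 1 w = cauchy μ w := by
  simp [fprime]

theorem exp_cauchy_of_fprime_eq_zero {χ η : ℝ} {w : ℂ} (hw : w.im ≠ 0)
    (hroot : fprime μ χ η w = 0) : exp (cauchy μ w) = 1 + (1 - η) / (w - χ) := by
  have hA := sub_ofReal_ne_zero hw χ
  have hB : w - χ - η + 1 ≠ 0 := by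
    convert sub_ofReal_ne_zero hw (χ + η - 1) using 1
    push_cast
    ring
  have hC : cauchy μ w = log (w - χ - η + 1) - log (w - χ) := by
    rw [fprime] at hroot
    linear_combination hroot
  rw [hC, exp_sub, exp_log hA, exp_log hB]
  field_simp
  ring

end CauchyTransform

theorem fprime_root_eq_chiL_etaL_general (μ : Measure ℝ) [IsProbabilityMeasure μ]
    (χ η : ℝ) (w : ℂ) (hw : 0 < w.im) (hroot : fprime μ χ η w = 0) :
    Complex.exp (cauchy μ w) ≠ Complex.exp (cauchy μ ((starRingEnd ℂ) w)) ∧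
    (χ : ℂ) = chiL μ w ∧ (η : ℂ) = etaL μ w := by
  have hw' : (conj w).im ≠ 0 := by simpa using hw.ne'
  have hu := exp_cauchy_of_fprime_eq_zero μ hw.ne' hroot
  have hv : exp (cauchy μ (conj w)) = 1 + (1 - η) / (conj w - χ) := by
    rw [cauchy_conj, exp_conj, hu]
    simp
  have hη : (η : ℂ) ≠ 1 := by
    rintro hη
    rw [ofReal_eq_one.1 hη, fprime_one] at hroot
    simpa [hroot] using cauchy_im_neg μ hw
  have hw_ne : w ≠ conj w := fun h => hw.ne' (conj_eq_iff_im.1 h.symm)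
  have hz := sub_ofReal_ne_zero hw.ne' χ
  have hz' := sub_ofReal_ne_zero hw' χ
  exact ⟨ne_of_eq_one_add_div hη hw_ne hz hz' hu hv,
    center_eq_of_eq_one_add_div hη hw_ne hz hz' hu hv,
    param_eq_of_eq_one_add_div hη hw_ne hz hz' hu hv⟩

/-- If `w ∈ ℍ` is a root of `f′_{(χ,η)}`, then `e^{C(w)} ≠ e^{C(w̄)}` and
`χ = χ_L(w)`, `η = η_L(w)`. -/
theorem fprime_root_eq_chiL_etaL (μ : Measure ℝ) (a b : ℝ) [IsProbabilityMeasure μ]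
    (hle : μ ≤ volume) (hsupp : msupport μ ⊆ Set.Icc a b)
    (ha : a ∈ msupport μ) (hb : b ∈ msupport μ) (hab : 1 < b - a)
    (χ η : ℝ) (w : ℂ) (hw : 0 < w.im) (hroot : fprime μ χ η w = 0) :
    Complex.exp (cauchy μ w) ≠ Complex.exp (cauchy μ ((starRingEnd ℂ) w)) ∧
    (χ : ℂ) = chiL μ w ∧ (η : ℂ) = etaL μ w :=
  fprime_root_eq_chiL_etaL_general μ χ η w hw hroot
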